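/- arXiv:1807.04930 — 3 statements merged into one kernel-verified Lean document; each statement's English description precedes it below -/
import Mathlib

section
/- Let Q be a complex number with Re(Q) > 0 and let U = { y ∈ ℂ : Re(y) > 0 and |y| < 1/Re(Q) }. If y_1, …, y_d ∈ U and y = 1/(Q + Σ_{i=1}^d y_i), then y ∈ U, and moreover Re(y) ≥ Re(Q) / (|Q| + d/Re(Q))². -/
open Finset

lemma norm_add_sum_le_of_le {ι E : Type*} [SeminormedAddCommGroup E] (s : Finset ι) (q : E)
    {y : ι → E} {r : ℝ} (hy : ∀ i ∈ s, ‖y i‖ ≤ r) : ‖q + ∑ i ∈ s, y i‖ ≤ ‖q‖ + #s * r := by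
  calc ‖q + ∑ i ∈ s, y i‖ ≤ ‖q‖ + ‖∑ i ∈ s, y i‖ := norm_add_le _ _
    _ ≤ ‖q‖ + ∑ _i ∈ s, r := by gcongr; exact norm_sum_le_of_le s hy
    _ = ‖q‖ + #s * r := by rw [sum_const, nsmul_eq_mul]

namespace Complex

lemma re_lt_re_add_sum {ι : Type*} {s : Finset ι} (hs : s.Nonempty) (q : ℂ) {y : ι → ℂ}
    (hy : ∀ i ∈ s, 0 < (y i).re) : q.re < (q + ∑ i ∈ s, y i).re := by
  rw [add_re, re_sum]
  linarith [sum_pos hy hs]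

lemma one_div_re_eq (z : ℂ) : (1 / z).re = z.re / ‖z‖ ^ 2 := by
  rw [one_div, inv_re, normSq_eq_norm_sq]

lemma one_div_re_pos {z : ℂ} (hz : 0 < z.re) : 0 < (1 / z).re := by
  rw [one_div_re_eq]
  have : z ≠ 0 := fun h => by simp [h] at hz
  positivity

lemma norm_one_div_lt_of_lt_re {a : ℝ} {z : ℂ} (ha : 0 < a) (h : a < z.re) :
    ‖1 / z‖ < 1 / a := by
  rw [norm_div, norm_one]
  exact one_div_lt_one_div_of_lt ha (h.trans_le (re_le_norm z))

lemma div_sq_le_one_div_re {a B : ℝ} {z : ℂ} (ha : 0 < a) (hre : a ≤ z.re) (hnorm : ‖z‖ ≤ B) :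
    a / B ^ 2 ≤ (1 / z).re := by
  have hz : z ≠ 0 := fun h => by simp [h] at hre; linarith
  rw [one_div_re_eq]
  exact div_le_div₀ (ha.le.trans hre) hre (by positivity)
    (pow_le_pow_left₀ (norm_nonneg z) hnorm 2)

end Complex

open Complex in
theorem stmt2 (Q : ℂ) (hQ : 0 < Q.re) (d : ℕ) (hd : 1 ≤ d) (y : Fin d → ℂ)
    (hy : ∀ i, 0 < (y i).re ∧ ‖y i‖ < 1 / Q.re) :
    (0 < (1 / (Q + ∑ i, y i)).re ∧ ‖1 / (Q + ∑ i, y i)‖ < 1 / Q.re) ∧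
      Q.re / (‖Q‖ + d / Q.re) ^ 2 ≤ (1 / (Q + ∑ i, y i)).re := by
  have : Nonempty (Fin d) := ⟨⟨0, hd⟩⟩
  have hre : Q.re < (Q + ∑ i, y i).re :=
    re_lt_re_add_sum univ_nonempty Q fun i _ => (hy i).1
  have hnorm : ‖Q + ∑ i, y i‖ ≤ ‖Q‖ + d / Q.re := by
    have := norm_add_sum_le_of_le univ Q fun i _ => (hy i).2.le
    rwa [card_univ, Fintype.card_fin, ← div_eq_mul_one_div] at this
  exact ⟨⟨one_div_re_pos (hQ.trans hre), norm_one_div_lt_of_lt_re hQ hre⟩,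
    div_sq_le_one_div_re hQ hre.le hnorm⟩
end

section
/- For integer Δ ≥ 3 and γ = −1/(4(Δ−1)(cos θ)²) with θ ∈ (0, π/2) not a rational multiple of π, define sequences by u_0 = z_0 = 1 and, for n ≥ 1, u_n = z_{n−1}^{Δ−1} and z_n = z_{n−1}^{Δ−1} + (Δ−1)γ z_{n−1}^{Δ−2} u_{n−1}. Then for all n ≥ 0, z_n ≠ 0 and u_n/z_n = 2cos(θ) · sin((n+1)θ)/sin((n+2)θ). -/
/-!
The ratio `r n = u n / z n` obeys `r (n + 1) = (1 + (Δ - 1) γ r n)⁻¹`, and `(Δ - 1) γ = -1 / (4 cos² θ)`.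
By the recurrence `sin ((t + 3) θ) = 2 cos θ sin ((t + 2) θ) - sin ((t + 1) θ)`, the map
`r ↦ (1 - r / (4 cos² θ))⁻¹` sends `2 cos θ sin ((t + 1) θ) / sin ((t + 2) θ)` to the same expression
at `t + 1`. Since `θ / π` is irrational, no `sin (k θ)` with `k ≥ 1` vanishes, so every step is
defined and `z` never vanishes.
-/

open Real

lemma sin_nat_mul_ne_zero_of_forall_ne_rat_mul_pi {θ : ℝ} (hθ : ∀ q : ℚ, θ ≠ q * π)
    {k : ℕ} (hk : k ≠ 0) : sin (k * θ) ≠ 0 := by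
  rw [Ne, sin_eq_zero_iff]
  rintro ⟨m, hm⟩
  apply hθ (m / k)
  have hk' : (k : ℝ) ≠ 0 := Nat.cast_ne_zero.mpr hk
  push_cast
  field_simp
  linarith

lemma cos_ne_zero_of_forall_ne_rat_mul_pi {θ : ℝ} (hθ : ∀ q : ℚ, θ ≠ q * π) : cos θ ≠ 0 := by
  have h := sin_nat_mul_ne_zero_of_forall_ne_rat_mul_pi hθ two_ne_zero
  rw [Nat.cast_two, sin_two_mul] at h
  exact right_ne_zero_of_mul h

lemma sin_add_three_mul_eq (t θ : ℝ) :
    sin ((t + 3) * θ) = 2 * cos θ * sin ((t + 2) * θ) - sin ((t + 1) * θ) := by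
  rw [show (t + 3) * θ = (t + 2) * θ + θ by ring, show (t + 1) * θ = (t + 2) * θ - θ by ring,
    sin_add, sin_sub]
  ring

lemma pow_add_mul_pow_mul_ne_zero_and_div {m : ℕ} {a x y : ℝ} (hx : x ≠ 0)
    (h : 1 + a * (y / x) ≠ 0) :
    x ^ (m + 1) + a * x ^ m * y ≠ 0 ∧
      x ^ (m + 1) / (x ^ (m + 1) + a * x ^ m * y) = (1 + a * (y / x))⁻¹ := by
  have hfactor : x ^ (m + 1) + a * x ^ m * y = x ^ (m + 1) * (1 + a * (y / x)) := by
    field_simp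
    ring
  have hpow : x ^ (m + 1) ≠ 0 := pow_ne_zero _ hx
  rw [hfactor]
  exact ⟨mul_ne_zero hpow h, by field_simp⟩

lemma one_add_mul_sin_ratio_eq {θ t : ℝ} (hc : cos θ ≠ 0) (hs : sin ((t + 2) * θ) ≠ 0) :
    1 + -1 / (4 * cos θ ^ 2) * (2 * cos θ * (sin ((t + 1) * θ) / sin ((t + 2) * θ))) =
      sin ((t + 3) * θ) / (2 * cos θ * sin ((t + 2) * θ)) := by
  rw [sin_add_three_mul_eq]
  generalize sin ((t + 2) * θ) = s at hs ⊢
  field_simp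
  ring

theorem stmt13_general (Δ : ℕ) (hΔ : 3 ≤ Δ) (θ : ℝ)
    (hirr : ∀ q : ℚ, θ ≠ (q : ℝ) * π) (γ : ℝ)
    (hγ : γ = -1 / (4 * ((Δ : ℝ) - 1) * (Real.cos θ) ^ 2))
    (u z : ℕ → ℝ) (hu0 : u 0 = 1) (hz0 : z 0 = 1)
    (hu : ∀ n : ℕ, u (n + 1) = z n ^ (Δ - 1))
    (hz : ∀ n : ℕ, z (n + 1) = z n ^ (Δ - 1) + ((Δ : ℝ) - 1) * γ * z n ^ (Δ - 2) * u n) :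
    ∀ n : ℕ, z n ≠ 0 ∧
      u n / z n = 2 * Real.cos θ * (Real.sin ((n + 1) * θ) / Real.sin ((n + 2) * θ)) := by
  have hc := cos_ne_zero_of_forall_ne_rat_mul_pi hirr
  have hsin (k : ℕ) (hk : k ≠ 0) := sin_nat_mul_ne_zero_of_forall_ne_rat_mul_pi hirr hk
  have ha : ((Δ : ℝ) - 1) * γ = -1 / (4 * cos θ ^ 2) := by
    have hΔ' : (Δ : ℝ) - 1 ≠ 0 := by
      have h3 : (3 : ℝ) ≤ Δ := by exact_mod_cast hΔ
      linarith
    rw [hγ]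
    field_simp
  obtain ⟨m, rfl⟩ : ∃ m, Δ = m + 2 := ⟨Δ - 2, by omega⟩
  simp only [Nat.add_sub_cancel, show m + 2 - 1 = m + 1 by omega, ha] at hu hz
  intro n
  induction n with
  | zero =>
    have hs1 := hsin 1 one_ne_zero
    rw [Nat.cast_one, one_mul] at hs1
    simp only [hu0, hz0, CharP.cast_eq_zero, zero_add, one_mul, sin_two_mul]
    exact ⟨one_ne_zero, by field_simp⟩
  | succ n ih =>
    obtain ⟨hzn, hr⟩ := ih
    have hs2 := hsin (n + 2) (by omega)
    have hs3 := hsin (n + 3) (by omega)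
    push_cast at hs2 hs3
    have hfactor := one_add_mul_sin_ratio_eq (t := n) hc hs2
    rw [← hr] at hfactor
    obtain ⟨hne, hdiv⟩ := pow_add_mul_pow_mul_ne_zero_and_div (m := m) hzn
      (hfactor ▸ div_ne_zero hs3 (mul_ne_zero (mul_ne_zero two_ne_zero hc) hs2))
    rw [hz, hu, hdiv, hfactor, inv_div]
    refine ⟨hne, ?_⟩
    push_cast
    ring_nf

open Real in
theorem stmt13 (Δ : ℕ) (hΔ : 3 ≤ Δ) (θ : ℝ) (hθ₀ : 0 < θ) (hθ₁ : θ < π / 2)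
    (hirr : ∀ q : ℚ, θ ≠ (q : ℝ) * π) (γ : ℝ)
    (hγ : γ = -1 / (4 * ((Δ : ℝ) - 1) * (Real.cos θ) ^ 2))
    (u z : ℕ → ℝ) (hu0 : u 0 = 1) (hz0 : z 0 = 1)
    (hu : ∀ n : ℕ, u (n + 1) = z n ^ (Δ - 1))
    (hz : ∀ n : ℕ, z (n + 1) = z n ^ (Δ - 1) + ((Δ : ℝ) - 1) * γ * z n ^ (Δ - 2) * u n) :
    ∀ n : ℕ, z n ≠ 0 ∧
      u n / z n = 2 * Real.cos θ * (Real.sin ((n + 1) * θ) / Real.sin ((n + 2) * θ)) :=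
  stmt13_general Δ hΔ θ hirr γ hγ u z hu0 hz0 hu hz
end

section
/- Let θ ∈ (0, π/2) be such that θ/π is irrational. Then the sequence W_n = sin((n+1)θ)/sin((n+2)θ), n = 0, 1, 2, …, is dense in ℝ. -/
/-!
With `f b = sin (b - θ) / sin b`, which is `π`-periodic, the sequence is `n ↦ f ((n + 2) θ)`.
The points `(n + 2) θ` are dense modulo `π` because `θ / π` is irrational, and every real `x`
is a value `f β` at a point `β` where `f` is continuous; hence `x` is a limit point of the sequence.
-/

open Real Function

theorem DenseRange.comp_of_forall_continuousAt {ι X Y : Type*} [TopologicalSpace X]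
    [TopologicalSpace Y] {F : X → Y} {v : ι → X} (hv : DenseRange v)
    (hF : ∀ y, ∃ p, ContinuousAt F p ∧ F p = y) : DenseRange (F ∘ v) := by
  intro y
  obtain ⟨p, hp, rfl⟩ := hF y
  rw [Set.range_comp]
  exact mem_closure_image hp (hv p)

theorem Function.Periodic.continuousAt_lift {α Y : Type*} [AddGroup α] [TopologicalSpace α]
    [IsTopologicalAddGroup α] [TopologicalSpace Y] {f : α → Y} {c : α} (h : Periodic f c)
    {x : α} (hf : ContinuousAt f x) : ContinuousAt h.lift (x : α ⧸ AddSubgroup.zmultiples c) := by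
  rw [ContinuousAt, QuotientAddGroup.nhds_eq, Filter.tendsto_map'_iff]
  exact hf

theorem AddCircle.denseRange_natCast_mul_add {a p : ℝ} [Fact (0 < p)] (h : Irrational (a / p))
    (b : ℝ) : DenseRange (fun n : ℕ => ((n * a + b : ℝ) : AddCircle p)) := by
  have hmul : DenseRange (fun n : ℕ => n • (a : AddCircle p)) :=
    denseRange_zsmul_iff_nsmul.1 (AddCircle.denseRange_zsmul_coe_iff.2 h)
  convert (Homeomorph.addRight (b : AddCircle p)).surjective.denseRange.comp hmul
    (Homeomorph.addRight _).continuous using 2 with n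
  rw [comp_apply, Homeomorph.coe_addRight, AddCircle.coe_add, ← nsmul_eq_mul, AddCircle.coe_nsmul]

theorem Real.sin_ne_zero_of_irrational_div_pi {θ : ℝ} (h : Irrational (θ / π)) : sin θ ≠ 0 := by
  intro hsin
  obtain ⟨n, rfl⟩ := sin_eq_zero_iff.1 hsin
  exact h ⟨n, by simp [pi_ne_zero]⟩

theorem Real.periodic_sin_sub_div_sin (θ : ℝ) : Periodic (fun b => sin (b - θ) / sin b) π := by
  intro b
  simp only [add_sub_right_comm, sin_add_pi, neg_div_neg_eq]

theorem Real.exists_sin_sub_eq_mul_sin {θ : ℝ} (hθ : sin θ ≠ 0) (x : ℝ) :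
    ∃ β, sin β ≠ 0 ∧ sin (β - θ) = x * sin β := by
  set g : ℝ → ℝ := fun b => sin (b - θ) - x * sin b
  have hroot : (0 : ℝ) ∈ g '' Set.uIcc 0 π := by
    -- `g 0 = -sin θ` and `g π = sin θ` have opposite signs
    refine intermediate_value_uIcc (by fun_prop) ?_
    simp only [g, Set.mem_uIcc, zero_sub, sin_neg, sin_zero, mul_zero, sub_zero, sin_pi_sub, sin_pi]
    rcases hθ.lt_or_gt with h | h <;> [right; left] <;> constructor <;> linarith
  obtain ⟨β, -, hβ⟩ := hroot
  refine ⟨β, fun hsin => ?_, by linarith [show g β = 0 from hβ]⟩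
  -- at a root with `sin β = 0` the equation reduces to `cos β * sin θ = 0`
  have hcos : cos β = 0 := by simpa [g, sin_sub, hsin, hθ] using hβ
  simpa [hsin, hcos] using sin_sq_add_cos_sq β

open Real in
theorem stmt15_general (θ : ℝ) (hirr : Irrational (θ / π)) :
    ∀ x : ℝ, ∀ ε > (0 : ℝ), ∃ n : ℕ,
      |Real.sin ((n + 1) * θ) / Real.sin ((n + 2) * θ) - x| < ε := by
  have : Fact (0 < π) := ⟨pi_pos⟩
  have hper := periodic_sin_sub_div_sin θ
  have hdense : DenseRange (fun n : ℕ => sin ((n + 1) * θ) / sin ((n + 2) * θ)) := by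
    convert (AddCircle.denseRange_natCast_mul_add hirr (2 * θ)).comp_of_forall_continuousAt
      (F := hper.lift) fun x => ?_ using 2 with n
    · simp only [comp_apply, Periodic.lift_coe]
      ring_nf
    obtain ⟨β, hβ, hx⟩ := exists_sin_sub_eq_mul_sin (sin_ne_zero_of_irrational_div_pi hirr) x
    refine ⟨β, hper.continuousAt_lift ((by fun_prop : ContinuousAt _ β).div (by fun_prop) hβ), ?_⟩
    simp [hx, hβ]
  intro x ε hε
  obtain ⟨n, hn⟩ := Metric.denseRange_iff.1 hdense x ε hε
  exact ⟨n, by rwa [dist_comm, Real.dist_eq] at hn⟩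

open Real in
theorem stmt15 (θ : ℝ) (hθ₀ : 0 < θ) (hθ₁ : θ < π / 2) (hirr : Irrational (θ / π)) :
    ∀ x : ℝ, ∀ ε > (0 : ℝ), ∃ n : ℕ,
      |Real.sin ((n + 1) * θ) / Real.sin ((n + 2) * θ) - x| < ε :=
  stmt15_general θ hirr
end
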